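/- arXiv:1711.04262 — 7 statements merged into one kernel-verified Lean document; each statement's English description precedes it below -/
import Mathlib

section
/- For every n ∈ ℕ and every f* ∈ Pₙ, there exists f ∈ Pₙ₊₁ such that (n+1, f) is stronger than (n, f*), i.e., f a k = f* a k for all a ∈ A and all k < n. -/
/-- `Pcond A n` is the set of forcing conditions of length `n`: functions
`f : A → (Fin n → Bool)` such that the set of `a` where some coordinate of
`f a` is `false` is countable, and every `t : Fin n → Bool` is attained by
`f` on an infinite set. -/
def Pcond (A : Type*) (n : ℕ) : Set (A → Fin n → Bool) :=
  {f | {a : A | ∃ k : Fin n, f a k = false}.Countable ∧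
       ∀ t : Fin n → Bool, {a : A | f a = t}.Infinite}

/-- The forcing `P = ⋃ₙ Pₙ`: pairs `(n, f)` with `f ∈ Pcond A n`. -/
structure ForcingCond (A : Type*) where
  n : ℕ
  f : A → Fin n → Bool
  mem : f ∈ Pcond A n

/-- `p` is stronger than (or equal to) `q`: `q.n ≤ p.n` and `p.f` agrees with
`q.f` on all coordinates `k < q.n`. -/
def Stronger {A : Type*} (p q : ForcingCond A) : Prop :=
  ∃ h : q.n ≤ p.n, ∀ (a : A) (k : Fin q.n), p.f a (Fin.castLE h k) = q.f a k

/-- For every `n` and every `f* ∈ Pₙ`, there is `f ∈ Pₙ₊₁` such that `(n+1, f)`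
is stronger than `(n, f*)`: `f a k = f* a k` for all `a` and all `k < n`. -/
theorem exists_extension_to_succ (A : Type*)
    (hA : ¬ (Set.univ : Set A).Countable)
    (n : ℕ) (fstar : A → Fin n → Bool) (hfstar : fstar ∈ Pcond A n) :
    ∃ f : A → Fin (n + 1) → Bool, f ∈ Pcond A (n + 1) ∧
      ∀ (a : A) (k : Fin n), f a k.castSucc = fstar a k := by
  classical
  obtain ⟨hcnt, hinf⟩ := hfstar
  have g : ∀ t : Fin n → Bool, ℕ ↪ {a : A | fstar a = t} :=
    fun t => (hinf t).natEmbedding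
  set D : Set A :=
    ⋃ t : Fin n → Bool,
      Set.range (fun k : ℕ => ((g t (2 * k) : {a : A | fstar a = t}) : A)) with hDdef
  have hDc : D.Countable := Set.countable_iUnion (fun t => Set.countable_range _)
  have hmemD : ∀ a, a ∈ D ↔ ∃ t k, ((g t (2 * k) : {a : A | fstar a = t}) : A) = a := by
    intro a
    simp [hDdef, Set.mem_iUnion]
  set f : A → Fin (n + 1) → Bool := fun a k =>
    if h : (k : ℕ) < n then fstar a ⟨k, h⟩ else (if a ∈ D then false else true) with hfdef
  have hcast : ∀ (a : A) (k : Fin n), f a k.castSucc = fstar a k := by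
    intro a k
    have hk : ((k.castSucc : Fin (n+1)) : ℕ) < n := k.isLt
    simp only [hfdef, dif_pos hk]
    congr 1
  have hlast : ∀ a : A, f a (Fin.last n) = if a ∈ D then false else true := by
    intro a
    have : ¬ ((Fin.last n : Fin (n+1)) : ℕ) < n := by simp
    simp only [hfdef, dif_neg this]
  refine ⟨f, ⟨?_, ?_⟩, hcast⟩
  · -- countability
    apply Set.Countable.mono ?_ (hcnt.union hDc)
    intro a ha
    obtain ⟨k, hk⟩ := ha
    rcases Fin.eq_castSucc_or_eq_last k with ⟨j, rfl⟩ | rfl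
    · exact Or.inl ⟨j, by rwa [hcast] at hk⟩
    · refine Or.inr ?_
      by_contra haD
      rw [hlast a, if_neg haD] at hk
      simp at hk
  · -- each t' attained infinitely often
    intro t'
    set t : Fin n → Bool := fun k => t' k.castSucc with htdef
    have key : ∀ a : A, fstar a = t → (if a ∈ D then false else true) = t' (Fin.last n) →
        f a = t' := by
      intro a h1 h2
      funext k
      refine Fin.lastCases ?_ ?_ k
      · rw [hlast a, h2]
      · intro j
        rw [hcast, h1]
    by_cases hb : t' (Fin.last n) = false
    · -- use the even-indexed elements of g t
      apply Set.infinite_of_injective_forall_mem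
        (f := fun k : ℕ => ((g t (2 * k) : {a : A | fstar a = t}) : A))
      · intro i j hij
        have := (g t).injective (Subtype.coe_injective hij)
        omega
      · intro k
        have hft : fstar ((g t (2*k) : {a : A | fstar a = t}) : A) = t := (g t (2*k)).2
        have hD : ((g t (2*k) : {a : A | fstar a = t}) : A) ∈ D :=
          (hmemD _).2 ⟨t, k, rfl⟩
        exact key _ hft (by rw [if_pos hD, hb])
    · -- use odd-indexed elements of g t
      have hb' : t' (Fin.last n) = true := by
        cases h : t' (Fin.last n) with
        | false => exact absurd h hb
        | true => rfl
      apply Set.infinite_of_injective_forall_mem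
        (f := fun k : ℕ => ((g t (2 * k + 1) : {a : A | fstar a = t}) : A))
      · intro i j hij
        have := (g t).injective (Subtype.coe_injective hij)
        omega
      · intro k
        have hft : fstar ((g t (2*k+1) : {a : A | fstar a = t}) : A) = t := (g t (2*k+1)).2
        have hD : ((g t (2*k+1) : {a : A | fstar a = t}) : A) ∉ D := by
          intro hmem
          obtain ⟨s, m, hsm⟩ := (hmemD _).1 hmem
          have hfs : fstar ((g s (2*m) : {a : A | fstar a = s}) : A) = s := (g s (2*m)).2
          have hst : s = t := by rw [hsm, hft] at hfs; exact hfs.symm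
          subst hst
          have := (g t).injective (Subtype.coe_injective hsm)
          omega
        exact key _ hft (by rw [if_neg hD, hb'])
end

section
/- For every n ∈ ℕ, the set Dₙ = {(n', f) ∈ P : n' ≥ n} is dense in P. -/
lemma Stronger.refl' {A : Type*} (p : ForcingCond A) : Stronger p p :=
  ⟨le_refl _, fun a k => rfl⟩

lemma Stronger.trans' {A : Type*} {p q r : ForcingCond A}
    (h1 : Stronger p q) (h2 : Stronger q r) : Stronger p r := by
  obtain ⟨h1n, h1f⟩ := h1
  obtain ⟨h2n, h2f⟩ := h2
  refine ⟨h2n.trans h1n, fun a k => ?_⟩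
  have : Fin.castLE (h2n.trans h1n) k = Fin.castLE h1n (Fin.castLE h2n k) := rfl
  rw [this, h1f, h2f]

lemma step_one {A : Type*} (p : ForcingCond A) :
    ∃ q : ForcingCond A, q.n = p.n + 1 ∧ Stronger q p := by
  classical
  obtain ⟨m, f, hcount, hinf⟩ := p
  -- embeddings into each fiber
  let e : ∀ t : Fin m → Bool, ℕ ↪ {a : A | f a = t} := fun t => (hinf t).natEmbedding
  let C : (Fin m → Bool) → Set A := fun t => Set.range (fun i => ((e t) (2 * i) : A))
  let U : Set A := ⋃ t, C t
  have hCsub : ∀ t, C t ⊆ {a : A | f a = t} := by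
    rintro t a ⟨i, rfl⟩
    exact (e t (2 * i)).2
  have hmemU : ∀ a : A, a ∈ U ↔ a ∈ C (f a) := by
    intro a
    constructor
    · rintro ⟨s, ⟨t, rfl⟩, ha⟩
      have := hCsub t ha
      simp only [Set.mem_setOf_eq] at this
      rwa [this]
    · intro h; exact Set.mem_iUnion.2 ⟨f a, h⟩
  let g : A → Fin (m + 1) → Bool := fun a k =>
    Fin.lastCases (if a ∈ U then false else true) (fun j => f a j) k
  have hg_cast : ∀ a (j : Fin m), g a j.castSucc = f a j := by
    intro a j; simp [g]
  have hg_last : ∀ a, g a (Fin.last m) = if a ∈ U then false else true := by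
    intro a; simp [g]
  have hg_eq : ∀ a (t' : Fin (m + 1) → Bool),
      g a = t' ↔ (f a = fun j => t' j.castSucc) ∧ g a (Fin.last m) = t' (Fin.last m) := by
    intro a t'
    constructor
    · intro h
      refine ⟨funext fun j => ?_, by rw [h]⟩
      rw [← hg_cast a j, h]
    · rintro ⟨h1, h2⟩
      funext k
      refine Fin.lastCases h2 (fun j => ?_) k
      rw [hg_cast]
      exact congrFun h1 j
  refine ⟨⟨m + 1, g, ?_, ?_⟩, rfl, Nat.le_succ m, fun a k => hg_cast a k⟩
  · -- countability
    apply Set.Countable.mono ?_ (hcount.union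
      (Set.countable_iUnion fun t => Set.countable_range _) :
      ({a : A | ∃ k : Fin m, f a k = false} ∪ U).Countable)
    rintro a ⟨k, hk⟩
    refine Fin.lastCases ?_ (fun j hj => ?_) k hk
    · intro hk
      rw [hg_last] at hk
      right
      by_contra h
      simp [h] at hk
    · left
      rw [hg_cast] at hj
      exact ⟨j, hj⟩
  · -- infinitude
    intro t'
    set t : Fin m → Bool := fun j => t' j.castSucc with ht
    cases hlast : t' (Fin.last m) with
    | false
      -- fiber = C t : image of even indices
      =>
      apply Set.infinite_of_injective_forall_mem
        (f := fun i : ℕ => ((e t) (2 * i) : A))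
      · intro i j hij
        have := (e t).injective (Subtype.ext hij)
        omega
      · intro i
        have hmem : ((e t) (2 * i) : A) ∈ C t := ⟨i, rfl⟩
        have hfa : f ((e t) (2 * i) : A) = t := (e t (2 * i)).2
        have hU : ((e t) (2 * i) : A) ∈ U := by
          rw [hmemU, hfa]; exact hmem
        show g _ = t'
        rw [hg_eq, hg_last, if_pos hU, hlast, hfa]
        exact ⟨rfl, rfl⟩
    | true
      -- odd indices avoid U
      =>
      apply Set.infinite_of_injective_forall_mem
        (f := fun i : ℕ => ((e t) (2 * i + 1) : A))
      · intro i j hij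
        have := (e t).injective (Subtype.ext hij)
        omega
      · intro i
        have hfa : f ((e t) (2 * i + 1) : A) = t := (e t (2 * i + 1)).2
        have hU : ((e t) (2 * i + 1) : A) ∉ U := by
          rw [hmemU, hfa]
          rintro ⟨j, hj⟩
          have := (e t).injective (Subtype.ext hj)
          omega
        show g _ = t'
        rw [hg_eq, hg_last, if_neg hU, hlast, hfa]
        exact ⟨rfl, rfl⟩

/-- For every `n`, the set `Dₙ = {(n', f) ∈ P : n' ≥ n}` is dense in `P`. -/
theorem Dn_dense (A : Type*) (hA : ¬ (Set.univ : Set A).Countable) (n : ℕ) :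
    ∀ p : ForcingCond A, ∃ q : ForcingCond A, n ≤ q.n ∧ Stronger q p := by
  have key : ∀ (j : ℕ) (p : ForcingCond A), ∃ q, p.n + j ≤ q.n ∧ Stronger q p := by
    intro j
    induction j with
    | zero => exact fun p => ⟨p, by omega, Stronger.refl' p⟩
    | succ j ih =>
      intro p
      obtain ⟨q, hqn, hq⟩ := ih p
      obtain ⟨r, hrn, hr⟩ := step_one q
      exact ⟨r, by omega, hr.trans' hq⟩
  intro p
  obtain ⟨q, hqn, hq⟩ := key n p
  exact ⟨q, by omega, hq⟩
end

section
/- Fix a sequence (ℓₘ)ₘ∈ℕ of injective functions ℓₘ : ℕ → A whose images are pairwise disjoint. Then for every h : ℕ → Bool, the set D_h = {(n', f) ∈ P : ∃ n < n', ∃ m ∈ ℕ, ∀ k ∈ ℕ, f (ℓₘ k) n = h k} is dense in P. -/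
/-!
The condition `p` has finitely many fibers `{a | p.f a = t}`, all infinite, while the ranges of the
`ℓ m` are infinitely many pairwise disjoint sets; so by pigeonhole some `range (ℓ m)` leaves
infinitely many points of every fiber untouched. Extend `p` by one coordinate that equals `h`
along `ℓ m`, and off `range (ℓ m)` is `false` on a countably infinite part of each fiber with
infinite complement and `true` elsewhere: it is `false` only on a countable set and splits every
fiber into two infinite halves, so the extension is again a condition.
-/

theorem Set.Infinite.exists_subset_countable_infinite_diff {α : Type*} {S : Set α}
    (hS : S.Infinite) : ∃ E ⊆ S, E.Countable ∧ E.Infinite ∧ (S \ E).Infinite := by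
  obtain ⟨T, hTS, hTc, hTi⟩ := hS.exists_subset_countable_infinite
  obtain ⟨U, V, rfl, hdisj, hcard⟩ := hTi.exists_union_disjoint_cardinal_eq_of_infinite
  have hU_iff_V : U.Finite ↔ V.Finite := by
    obtain ⟨e⟩ := Cardinal.eq.mp hcard
    exact Set.finite_coe_iff.symm.trans (e.finite_iff.trans Set.finite_coe_iff)
  have hU : U.Infinite := fun hU ↦ hTi (hU.union (hU_iff_V.mp hU))
  have hV : V.Infinite := hU_iff_V.not.mp hU
  refine ⟨U, Set.subset_union_left.trans hTS, hTc.mono Set.subset_union_left, hU,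
    hV.mono fun a ha ↦ ⟨hTS (Or.inr ha), hdisj.notMem_of_mem_right ha⟩⟩

open Function in
/-- Pigeonhole: otherwise two disjoint sets `R m`, `R m'` would each contain all but finitely
many points of the same `S i`. -/
theorem exists_forall_infinite_diff {ι κ α : Type*} [Finite ι] [Infinite κ] {S : ι → Set α}
    (hS : ∀ i, (S i).Infinite) {R : κ → Set α} (hR : Pairwise (Disjoint on R)) :
    ∃ m, ∀ i, (S i \ R m).Infinite := by
  by_contra! hfin
  choose T hT using hfin
  obtain ⟨m, m', hne, heq⟩ := Finite.exists_ne_map_eq_of_infinite T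
  refine hS (T m) (((hT m).union (heq ▸ hT m')).subset fun a ha ↦ ?_)
  by_cases hm : a ∈ R m
  · exact Or.inr ⟨ha, (hR hne).notMem_of_mem_left hm⟩
  · exact Or.inl ⟨ha, hm⟩

theorem Fin.snoc_eq_iff {n : ℕ} {α : Type*} (p : Fin n → α) (x : α) (t : Fin (n + 1) → α) :
    Fin.snoc p x = t ↔ p = Fin.init t ∧ x = t (Fin.last n) := by
  rw [← Fin.snoc_init_self t, Fin.snoc_injective2.eq_iff, Fin.snoc_init_self]

namespace ForcingCond

variable {A : Type*}

theorem snoc_mem_Pcond {n : ℕ} {f : A → Fin n → Bool} (hf : f ∈ Pcond A n) {g : A → Bool}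
    (hg : {a | g a = false}.Countable) (hfib : ∀ t b, {a | f a = t ∧ g a = b}.Infinite) :
    (fun a ↦ Fin.snoc (f a) (g a) : A → Fin (n + 1) → Bool) ∈ Pcond A (n + 1) := by
  refine ⟨(hf.1.union hg).mono ?_, fun t ↦ ?_⟩
  · rintro a ⟨k, hk⟩
    induction k using Fin.lastCases with
    | last => exact Or.inr (by simpa using hk)
    | cast j => exact Or.inl ⟨j, by simpa using hk⟩
  · simpa only [Fin.snoc_eq_iff] using hfib (Fin.init t) (t (Fin.last n))

def snoc (p : ForcingCond A) (g : A → Bool) (hg : {a | g a = false}.Countable)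
    (hfib : ∀ t b, {a | p.f a = t ∧ g a = b}.Infinite) : ForcingCond A where
  n := p.n + 1
  f a := Fin.snoc (p.f a) (g a)
  mem := snoc_mem_Pcond p.mem hg hfib

variable (p : ForcingCond A) {g : A → Bool} (hg : {a | g a = false}.Countable)
  (hfib : ∀ t b, {a | p.f a = t ∧ g a = b}.Infinite)

theorem snoc_stronger : Stronger (p.snoc g hg hfib) p :=
  ⟨Nat.le_succ p.n, fun _ k ↦ Fin.snoc_castSucc (α := fun _ ↦ Bool) _ _ k⟩

theorem snoc_f_last (a : A) : (p.snoc g hg hfib).f a (Fin.last p.n) = g a :=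
  Fin.snoc_last (α := fun _ ↦ Bool) _ _

end ForcingCond

theorem exists_eqOn_countable_false_splitting_fibers {α ι : Type*} [Countable ι] (F : α → ι)
    {R : Set α} (hR : R.Countable) (hF : ∀ t, ({a | F a = t} \ R).Infinite) (g₀ : α → Bool) :
    ∃ g : α → Bool, Set.EqOn g g₀ R ∧ {a | g a = false}.Countable ∧
      ∀ t b, {a | F a = t ∧ g a = b}.Infinite := by
  classical
  choose E hES hEc hEi hSE using fun t ↦ (hF t).exists_subset_countable_infinite_diff
  have hg_off {a} (ha : a ∉ R) : R.piecewise g₀ (fun a ↦ decide (a ∉ E (F a))) a =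
      decide (a ∉ E (F a)) :=
    Set.piecewise_eq_of_notMem _ _ _ ha
  refine ⟨R.piecewise g₀ fun a ↦ decide (a ∉ E (F a)), Set.piecewise_eqOn _ _ _, ?_, ?_⟩
  · refine (hR.union (Set.countable_iUnion hEc)).mono fun a ha ↦ ?_
    by_cases haR : a ∈ R
    · exact Or.inl haR
    · simp only [Set.mem_ofPred_eq, hg_off haR, decide_eq_false_iff_not, not_not] at ha
      exact Or.inr (Set.mem_iUnion.mpr ⟨_, ha⟩)
  · rintro t (_ | _)
    · refine (hEi t).mono fun a ha ↦ ?_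
      obtain ⟨hat : F a = t, haR⟩ := hES t ha
      exact ⟨hat, by rw [hg_off haR, hat]; simpa using ha⟩
    · refine (hSE t).mono ?_
      rintro a ⟨⟨hat : F a = t, haR⟩, haE⟩
      exact ⟨hat, by rw [hg_off haR, hat]; simpa using haE⟩

theorem Dh_dense_general (A : Type*)
    (ℓ : ℕ → ℕ → A) (hinj : ∀ m : ℕ, Function.Injective (ℓ m))
    (hdisj : ∀ m m' : ℕ, m ≠ m' → Disjoint (Set.range (ℓ m)) (Set.range (ℓ m')))
    (h : ℕ → Bool) :
    ∀ p : ForcingCond A, ∃ q : ForcingCond A,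
      (∃ n : Fin q.n, ∃ m : ℕ, ∀ k : ℕ, q.f (ℓ m k) n = h k) ∧ Stronger q p := by
  intro p
  obtain ⟨m, hm⟩ := exists_forall_infinite_diff p.mem.2 hdisj
  obtain ⟨g, hgℓ, hg, hfib⟩ := exists_eqOn_countable_false_splitting_fibers p.f
    (Set.countable_range (ℓ m)) hm (Function.extend (ℓ m) h fun _ ↦ true)
  refine ⟨p.snoc g hg hfib, ⟨Fin.last p.n, m, fun k ↦ ?_⟩, p.snoc_stronger hg hfib⟩
  rw [p.snoc_f_last, hgℓ (Set.mem_range_self k), (hinj m).extend_apply]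

/-- Given a sequence `(ℓₘ)` of injective functions `ℕ → A` with pairwise
disjoint images, for every `h : ℕ → Bool` the set
`D_h = {(n', f) ∈ P : ∃ n < n', ∃ m, ∀ k, f (ℓₘ k) n = h k}` is dense in `P`. -/
theorem Dh_dense (A : Type*) (hA : ¬ (Set.univ : Set A).Countable)
    (ℓ : ℕ → ℕ → A) (hinj : ∀ m : ℕ, Function.Injective (ℓ m))
    (hdisj : ∀ m m' : ℕ, m ≠ m' → Disjoint (Set.range (ℓ m)) (Set.range (ℓ m')))
    (h : ℕ → Bool) :
    ∀ p : ForcingCond A, ∃ q : ForcingCond A,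
      (∃ n : Fin q.n, ∃ m : ℕ, ∀ k : ℕ, q.f (ℓ m k) n = h k) ∧ Stronger q p :=
  Dh_dense_general A ℓ hinj hdisj h
end

section
/- For every countable subset C ⊆ A, the set Z_C = {(n, f) ∈ P : ∀ a ∈ C, ∃ k < n, f a k = false} is dense in P. -/
/-- For every countable `C ⊆ A`, the set
`Z_C = {(n, f) ∈ P : ∀ a ∈ C, ∃ k < n, f a k = false}` is dense in `P`. -/
theorem ZC_dense (A : Type*) (hA : ¬ (Set.univ : Set A).Countable)
    (C : Set A) (hC : C.Countable) :
    ∀ p : ForcingCond A, ∃ q : ForcingCond A,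
      (∀ a ∈ C, ∃ k : Fin q.n, q.f a k = false) ∧ Stronger q p := by
  classical
  intro p
  obtain ⟨hcnt, hinf⟩ := p.mem
  set n := p.n with hn
  set f := p.f with hf
  -- embeddings into each fiber
  let E := fun t : Fin n → Bool => (hinf t).natEmbedding
  -- the countable "false" set for the new coordinate
  let S : Set A := ⋃ t, Set.range (fun m => (E t (2 * m)).1)
  let D : Set A := (C ∩ {a : A | f a = fun _ => true}) ∪ S
  have hD : D.Countable := by
    refine (hC.mono Set.inter_subset_left).union ?_
    exact Set.countable_iUnion fun t => Set.countable_range _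
  let g : A → Bool := fun a => if a ∈ D then false else true
  have hg_false : ∀ a, g a = false ↔ a ∈ D := by
    intro a
    by_cases h : a ∈ D <;> simp [g, h]
  -- the new function
  let F : A → Fin (n + 1) → Bool := fun a => Fin.snoc (f a) (g a)
  -- fiber characterization
  have hfib : ∀ (a : A) (t' : Fin (n + 1) → Bool),
      F a = t' ↔ (f a = Fin.init t' ∧ g a = t' (Fin.last n)) := by
    intro a t'
    constructor
    · intro h
      subst h
      exact ⟨by simp [F], by simp [F]⟩
    · rintro ⟨h1, h2⟩
      rw [show F a = Fin.snoc (f a) (g a) from rfl, h1, h2, Fin.snoc_init_self]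
  -- membership of elements of fiber ranges
  have hmemE : ∀ (t : Fin n → Bool) (m : ℕ), f ((E t m).1) = t := fun t m => (E t m).2
  -- main condition membership
  have hFmem : F ∈ Pcond A (n + 1) := by
    constructor
    · -- countability
      refine (hcnt.union hD).mono ?_
      rintro a ⟨k, hk⟩
      refine Fin.lastCases ?_ ?_ k hk
      · intro h
        right
        exact (hg_false a).1 (by simpa [F, Fin.snoc_last] using h)
      · intro j h
        left
        exact ⟨j, by simpa [F, Fin.snoc_castSucc] using h⟩
    · -- infinitude of all fibers
      intro t'
      set t : Fin n → Bool := Fin.init t' with ht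
      rcases hb : t' (Fin.last n) with _ | _
      · -- last bit false : use even-indexed elements of fiber t
        refine Set.infinite_of_injective_forall_mem
          (f := fun m : ℕ => (E t (2 * m)).1) ?_ ?_
        · intro m m' h
          have := (E t).injective (Subtype.ext h)
          omega
        · intro m
          refine (hfib _ _).2 ⟨hmemE t (2 * m), ?_⟩
          rw [hb, hg_false]
          exact Or.inr (Set.mem_iUnion.2 ⟨t, ⟨m, rfl⟩⟩)
      · -- last bit true
        by_cases htt : t = fun _ => true
        · -- all-true fiber: use uncountability
          have hsub : ((({a : A | ∃ k : Fin n, f a k = false}) ∪ D)ᶜ : Set A) ⊆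
              {a : A | F a = t'} := by
            intro a ha
            simp only [Set.mem_compl_iff, Set.mem_union, not_or] at ha
            refine (hfib a t').2 ⟨?_, ?_⟩
            · rw [← ht, htt]
              funext k
              by_contra hk
              exact ha.1 ⟨k, by simpa using hk⟩
            · rw [hb]
              by_contra hgk
              have : g a = false := by
                rcases hgg : g a with _ | _
                · rfl
                · exact absurd hgg hgk
              exact ha.2 ((hg_false a).1 this)
          refine Set.Infinite.mono hsub ?_
          by_contra hfin
          rw [Set.not_infinite] at hfin
          refine hA (((hcnt.union hD).union hfin.countable).mono ?_)
          intro a _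
          by_cases h : a ∈ ({a : A | ∃ k : Fin n, f a k = false} ∪ D)
          · exact Or.inl h
          · exact Or.inr h
        · -- other fibers: use odd-indexed elements
          refine Set.infinite_of_injective_forall_mem
            (f := fun m : ℕ => (E t (2 * m + 1)).1) ?_ ?_
          · intro m m' h
            have := (E t).injective (Subtype.ext h)
            omega
          · intro m
            refine (hfib _ _).2 ⟨hmemE t (2 * m + 1), ?_⟩
            rw [hb]
            rcases hgg : g ((E t (2 * m + 1)).1) with _ | _
            · exfalso
              have hmem := (hg_false _).1 hgg
              rcases hmem with hmem | hmem
              · exact htt (by rw [← hmemE t (2 * m + 1)]; exact hmem.2)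
              · obtain ⟨t'', hm⟩ := Set.mem_iUnion.1 hmem
                obtain ⟨m', hm'⟩ := hm
                have hm2 : ((E t'') (2 * m')).1 = ((E t) (2 * m + 1)).1 := hm'
                have ht2 : t'' = t := by
                  rw [← hmemE t'' (2 * m'), hm2, hmemE t (2 * m + 1)]
                subst ht2
                have := (E t).injective (Subtype.ext hm2)
                omega
            · rfl
  refine ⟨⟨n + 1, F, hFmem⟩, ?_, ?_⟩
  · -- every a ∈ C gets a false coordinate
    intro a haC
    by_cases hall : f a = fun _ => true
    · exact ⟨Fin.last n, by
        simp only [F, Fin.snoc_last]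
        exact (hg_false a).2 (Or.inl ⟨haC, hall⟩)⟩
    · have : ∃ k : Fin n, f a k = false := by
        by_contra h
        push_neg at h
        exact hall (funext fun k => by
          rcases hk : f a k with _ | _
          · exact absurd hk (h k)
          · rfl)
      obtain ⟨k, hk⟩ := this
      exact ⟨Fin.castSucc k, by simpa [F, Fin.snoc_castSucc] using hk⟩
  · -- stronger
    refine ⟨Nat.le_succ n, fun a k => ?_⟩
    show F a (Fin.castLE (Nat.le_succ n) k) = f a k
    have : Fin.castLE (Nat.le_succ n) k = Fin.castSucc k := rfl
    rw [this]
    simp [F, Fin.snoc_castSucc]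
end

section
/- For all a, b ∈ A with a ≠ b, the set {(n, f) ∈ P : ∃ k < n, f a k = false ∧ f b k = true} is dense in P. Consequently, any generic filter separates any two distinct elements of A. -/
/-- For distinct `a, b ∈ A`, the set
`{(n, f) ∈ P : ∃ k < n, f a k = false ∧ f b k = true}` is dense in `P`
(hence any generic filter separates `a` and `b`). -/
theorem separating_dense (A : Type*) (hA : ¬ (Set.univ : Set A).Countable)
    (a b : A) (hab : a ≠ b) :
    ∀ p : ForcingCond A, ∃ q : ForcingCond A,
      (∃ k : Fin q.n, q.f a k = false ∧ q.f b k = true) ∧ Stronger q p := by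
  classical
  intro p
  obtain ⟨hc, hinf⟩ := p.mem
  set n := p.n with hn
  -- embeddings of ℕ into each fiber
  let emb : ∀ t : Fin n → Bool, ℕ ↪ {x : A | p.f x = t} :=
    fun t => (hinf t).natEmbedding
  let ev : (Fin n → Bool) → ℕ → A := fun t k => (emb t (2 * k)).1
  let od : (Fin n → Bool) → ℕ → A := fun t k => (emb t (2 * k + 1)).1
  have hev_mem : ∀ t k, p.f (ev t k) = t := fun t k => (emb t (2 * k)).2
  have hod_mem : ∀ t k, p.f (od t k) = t := fun t k => (emb t (2 * k + 1)).2
  have hev_inj : ∀ t, Function.Injective (ev t) := by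
    intro t x y h
    have := (emb t).injective (Subtype.val_injective h)
    omega
  have hod_inj : ∀ t, Function.Injective (od t) := by
    intro t x y h
    have := (emb t).injective (Subtype.val_injective h)
    omega
  have hev_od : ∀ t j i, od t j ≠ ev t i := by
    intro t j i h
    have := (emb t).injective (Subtype.val_injective h)
    omega
  set C : Set A := ⋃ t : Fin n → Bool, Set.range (ev t) with hC
  set D : Set A := (C ∪ {a}) \ {b} with hD
  have hDcount : D.Countable := by
    refine Set.Countable.mono Set.diff_subset ?_
    exact (Set.countable_iUnion fun t => Set.countable_range _).union
      (Set.countable_singleton a)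
  let g : A → Bool := fun x => if x ∈ D then false else true
  have hg_false : ∀ x, g x = false ↔ x ∈ D := by
    intro x
    by_cases h : x ∈ D <;> simp [g, h]
  let F : A → Fin (n + 1) → Bool := fun x => Fin.snoc (p.f x) (g x)
  have hmem : F ∈ Pcond A (n + 1) := by
    constructor
    · refine Set.Countable.mono ?_ (hc.union hDcount)
      intro x hx
      obtain ⟨k, hk⟩ := hx
      induction k using Fin.lastCases with
      | last =>
        right
        rw [show F x (Fin.last n) = g x from Fin.snoc_last _ _] at hk
        exact (hg_false x).1 hk
      | cast k =>
        left
        exact ⟨k, by rwa [show F x k.castSucc = p.f x k from Fin.snoc_castSucc _ _ _] at hk⟩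
    · intro t
      set t' : Fin n → Bool := fun k => t k.castSucc with ht'
      have key : ∀ x, p.f x = t' → g x = t (Fin.last n) → F x = t := by
        intro x h1 h2
        funext k
        induction k using Fin.lastCases with
        | last => rw [show F x (Fin.last n) = g x from Fin.snoc_last _ _]; exact h2
        | cast k =>
          rw [show F x k.castSucc = p.f x k from Fin.snoc_castSucc _ _ _]
          exact congrFun h1 k
      rcases Bool.eq_false_or_eq_true (t (Fin.last n)) with hlast | hlast
      · -- use odd points, which avoid D (unless = a)
        have hsub : Set.range (od t') \ {a} ⊆ {x : A | F x = t} := by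
          rintro x ⟨⟨k, rfl⟩, hxa⟩
          refine key _ (hod_mem t' k) ?_
          rw [hlast]
          simp only [g]
          rw [if_neg]
          rintro ⟨hmem', -⟩
          rcases hmem' with hmem' | hmem'
          · obtain ⟨t'', ht''⟩ := Set.mem_iUnion.1 hmem'
            obtain ⟨i, hi⟩ := ht''
            have : t'' = t' := by
              rw [← hev_mem t'' i, hi, hod_mem t' k]
            rw [this] at hi
            exact hev_od t' k i hi.symm
          · exact hxa hmem'
        exact Set.Infinite.mono hsub
          ((Set.infinite_range_of_injective (hod_inj t')).diff (Set.finite_singleton a))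
      · -- use even points, which are in D (unless = b)
        have hsub : Set.range (ev t') \ {b} ⊆ {x : A | F x = t} := by
          rintro x ⟨⟨k, rfl⟩, hxb⟩
          refine key _ (hev_mem t' k) ?_
          rw [hlast, hg_false]
          exact ⟨Or.inl (Set.mem_iUnion.2 ⟨t', ⟨k, rfl⟩⟩), hxb⟩
        exact Set.Infinite.mono hsub
          ((Set.infinite_range_of_injective (hev_inj t')).diff (Set.finite_singleton b))
  refine ⟨⟨n + 1, F, hmem⟩, ⟨Fin.last n, ?_, ?_⟩, ?_⟩
  · show F a (Fin.last n) = false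
    rw [show F a (Fin.last n) = g a from Fin.snoc_last _ _, hg_false]
    exact ⟨Or.inr rfl, hab⟩
  · show F b (Fin.last n) = true
    rw [show F b (Fin.last n) = g b from Fin.snoc_last _ _]
    simp [g, hD]
  · refine ⟨Nat.le_succ n, fun x k => ?_⟩
    show F x (Fin.castLE (Nat.le_succ n) k) = p.f x k
    have : Fin.castLE (Nat.le_succ n) k = k.castSucc := rfl
    rw [this]
    exact Fin.snoc_castSucc _ _ _
end

section
/- Let C ⊆ A be countable, let n ∈ ℕ, and let f₀, f₁ ∈ Pₙ satisfy f₀ c = f₁ c for all c ∈ C. Suppose that for every t : Fin n → Bool having t k = false for some k, the sets {a ∈ A \ C : f₀ a = t} and {a ∈ A \ C : f₁ a = t} have the same cardinality. Then there exists a bijection Λ : A → A with Λ c = c for all c ∈ C such that f₁ ∘ Λ = f₀ (equivalently, f₁ = f₀ ∘ Λ⁻¹). -/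
open Cardinal

theorem Set.Countable.mk_compl_eq {A : Type*} [Uncountable A] {s : Set A}
    (hs : s.Countable) : #(sᶜ : Set A) = #A :=
  mk_compl_of_infinite s (hs.le_aleph0.trans_lt (aleph0_lt_mk_iff.mpr ‹_›))

theorem exists_equiv_comp_eq_of_mk_fiber_eq {α γ : Type*} {f g : α → γ}
    (h : ∀ c, #{a // f a = c} = #{a // g a = c}) : ∃ e : α ≃ α, ∀ a, g (e a) = f a :=
  ⟨Equiv.ofFiberEquiv fun c => (Cardinal.eq.mp (h c)).some, Equiv.ofFiberEquiv_map _⟩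

theorem exists_perm_fixing_of_mk_fiber_diff_eq {A τ : Type*} (C : Set A) {f₀ f₁ : A → τ}
    (hcard : ∀ t, #{a // a ∉ C ∧ f₀ a = t} = #{a // a ∉ C ∧ f₁ a = t}) :
    ∃ Λ : A ≃ A, (∀ c ∈ C, Λ c = c) ∧ ∀ a ∉ C, f₁ (Λ a) = f₀ a := by
  classical
  -- On `C` every point is its own fiber, so a fiberwise bijection for `φ` fixes `C`.
  let φ (f : A → τ) (a : A) : A ⊕ τ := if a ∈ C then .inl a else .inr (f a)
  have φ_eq_inl (f : A → τ) (a c : A) : φ f a = .inl c ↔ a ∈ C ∧ a = c := by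
    by_cases ha : a ∈ C <;> simp [φ, ha]
  have φ_eq_inr (f : A → τ) (a : A) (t : τ) : φ f a = .inr t ↔ a ∉ C ∧ f a = t := by
    by_cases ha : a ∈ C <;> simp [φ, ha]
  obtain ⟨Λ, hΛ⟩ : ∃ Λ : A ≃ A, ∀ a, φ f₁ (Λ a) = φ f₀ a := by
    refine exists_equiv_comp_eq_of_mk_fiber_eq fun x => ?_
    rcases x with c | t
    · simp only [φ_eq_inl]
    · simpa only [φ_eq_inr] using hcard t
  refine ⟨Λ, fun c hc => ?_, fun a ha => ?_⟩
  · exact ((φ_eq_inl f₁ _ c).mp ((hΛ c).trans (if_pos hc))).2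
  · exact ((φ_eq_inr f₁ _ _).mp ((hΛ a).trans (if_neg ha))).2

theorem Pcond.mk_fiber_true_diff_eq_mk {A : Type*} [Uncountable A] {C : Set A}
    (hC : C.Countable) {n : ℕ} {f : A → Fin n → Bool} (hf : f ∈ Pcond A n) :
    #{a // a ∉ C ∧ f a = fun _ => true} = #A := by
  suffices h : {a | a ∉ C ∧ f a = fun _ => true}ᶜ.Countable by
    have := h.mk_compl_eq
    rwa [compl_compl] at this
  refine (hC.union hf.1).mono fun a ha => ?_
  by_cases hc : a ∈ C
  · exact .inl hc
  · obtain ⟨k, hk⟩ := Function.ne_iff.mp fun h => ha ⟨hc, h⟩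
    exact .inr ⟨k, by simpa using hk⟩

/-- If `f₀, f₁ ∈ Pₙ` agree on a countable set `C` and, for every pattern
`t : Fin n → Bool` taking the value `false` somewhere, the fibers of `f₀` and
`f₁` over `t` outside `C` are equinumerous, then there is a bijection
`Λ : A → A` fixing `C` pointwise with `f₁ ∘ Λ = f₀`. -/
theorem exists_permutation_matching (A : Type*)
    (hA : ¬ (Set.univ : Set A).Countable)
    (C : Set A) (hC : C.Countable) (n : ℕ)
    (f₀ f₁ : A → Fin n → Bool) (hf₀ : f₀ ∈ Pcond A n) (hf₁ : f₁ ∈ Pcond A n)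
    (hagree : ∀ c ∈ C, f₀ c = f₁ c)
    (hcard : ∀ t : Fin n → Bool, (∃ k : Fin n, t k = false) →
      Cardinal.mk {a : A // a ∉ C ∧ f₀ a = t} =
        Cardinal.mk {a : A // a ∉ C ∧ f₁ a = t}) :
    ∃ Λ : A ≃ A, (∀ c ∈ C, Λ c = c) ∧ ∀ a : A, f₁ (Λ a) = f₀ a := by
  have : Uncountable A := not_countable_iff.mp (Set.countable_univ_iff.not.mp hA)
  have hcard_all (t : Fin n → Bool) :
      #{a // a ∉ C ∧ f₀ a = t} = #{a // a ∉ C ∧ f₁ a = t} := by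
    by_cases ht : ∃ k, t k = false
    · exact hcard t ht
    · obtain rfl : t = fun _ => true := funext fun k => by simpa using not_exists.mp ht k
      rw [Pcond.mk_fiber_true_diff_eq_mk hC hf₀, Pcond.mk_fiber_true_diff_eq_mk hC hf₁]
  obtain ⟨Λ, hΛC, hΛ⟩ := exists_perm_fixing_of_mk_fiber_diff_eq C hcard_all
  refine ⟨Λ, hΛC, fun a => ?_⟩
  by_cases ha : a ∈ C
  · rw [hΛC a ha, hagree a ha]
  · exact hΛ a ha
end

section
/- Let C ⊆ A be countable, let β be any type, and let ψ : P → β be a function such that for every bijection π : A → A with π c = c for all c ∈ C and every (n, f) ∈ P, one has ψ (n, f ∘ π) = ψ (n, f). Then the range of ψ has cardinality at most 2^ℵ₀ (the cardinality of the continuum). -/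
open Cardinal Set

lemma pow_le_continuum_aux {a b : Cardinal} (ha : a ≤ ℵ₀) (hb : b ≤ ℵ₀) :
    a ^ b ≤ Cardinal.continuum :=
  calc a ^ b ≤ ℵ₀ ^ b := Cardinal.power_le_power_right ha
    _ ≤ ℵ₀ ^ (ℵ₀ : Cardinal) := Cardinal.power_le_power_left Cardinal.aleph0_ne_zero hb
    _ = Cardinal.continuum := Cardinal.aleph0_power_aleph0

/-- Auxiliary: identify the subtype of `Cᶜ` satisfying `p` with the set `{a | p a} \ C`. -/
lemma mk_subtype_compl {A : Type*} (C : Set A) (p : A → Prop) :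
    #{x : ↥Cᶜ // p ↑x} = #↥({a | p a} \ C) :=
  Cardinal.mk_congr ⟨fun x => ⟨x.1.1, x.2, x.1.2⟩, fun a => ⟨⟨a.1, a.2.2⟩, a.2.1⟩,
    fun _ => rfl, fun _ => rfl⟩

/-- Auxiliary: if two conditions of the same length have fibers over `C`ᶜ of the same
extended natural cardinality, then those fibers are in fact equipotent. -/
lemma fiber_mk_eq {A : Type*} (hA : ¬ (Set.univ : Set A).Countable)
    {C : Set A} (hC : C.Countable) {n : ℕ} {f g : A → Fin n → Bool}
    (hf : f ∈ Pcond A n) (hg : g ∈ Pcond A n)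
    (hcard : ∀ t : Fin n → Bool, ({a | f a = t} \ C).encard = ({a | g a = t} \ C).encard)
    (t : Fin n → Bool) :
    #↥({a | f a = t} \ C) = #↥({a | g a = t} \ C) := by
  haveI huA : Uncountable A := ⟨fun h => hA (@Set.countable_univ _ h)⟩
  haveI hinf : Infinite A := inferInstance
  by_cases ht : ∀ k : Fin n, t k = true
  · have key : ∀ (F : A → Fin n → Bool), F ∈ Pcond A n →
        #↥({a | F a = t} \ C) = #A := by
      intro F hF
      have hco : ({a | F a = t} \ C) = (C ∪ {a | ¬ F a = t})ᶜ := by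
        ext a
        simp only [Set.mem_diff, Set.mem_setOf_eq, Set.mem_compl_iff, Set.mem_union, not_or,
          not_not]
        tauto
      have hcnt : (C ∪ {a | ¬ F a = t}).Countable := by
        refine hC.union (hF.1.mono ?_)
        intro a ha
        simp only [Set.mem_setOf_eq] at ha ⊢
        obtain ⟨k, hk⟩ : ∃ k, F a k ≠ t k := by
          by_contra h
          push_neg at h
          exact ha (funext h)
        exact ⟨k, by rw [ht k] at hk; simpa using hk⟩
      rw [hco]
      exact Cardinal.mk_compl_of_infinite _
        (lt_of_le_of_lt (Set.Countable.le_aleph0 hcnt) Cardinal.aleph0_lt_mk)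
    rw [key f hf, key g hg]
  · push_neg at ht
    obtain ⟨k, hk⟩ := ht
    replace hk : t k = false := by simpa using hk
    have key : ∀ (F : A → Fin n → Bool), F ∈ Pcond A n → ({a | F a = t} \ C).Countable := by
      intro F hF
      refine (hF.1.mono ?_).mono Set.diff_subset
      intro a ha
      exact ⟨k, by rw [ha]; exact hk⟩
    have h1 := key f hf
    have h2 := key g hg
    have e1 : #↥({a | f a = t} \ C) ≤ ℵ₀ := by
      haveI := h1.to_subtype; exact Cardinal.mk_le_aleph0
    have e2 : #↥({a | g a = t} \ C) ≤ ℵ₀ := by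
      haveI := h2.to_subtype; exact Cardinal.mk_le_aleph0
    exact Cardinal.toENat_injOn e1 e2 (hcard t)

/-- Auxiliary: two conditions of the same length agreeing on `C` whose fibers away from `C`
are equipotent are related by a bijection of `A` fixing `C`, hence get the same `ψ`-value. -/
lemma psi_eq {A : Type*} {β : Type*} {C : Set A}
    (ψ : ForcingCond A → β)
    (hinv : ∀ π : A ≃ A, (∀ c ∈ C, π c = c) →
      ∀ (p : ForcingCond A) (hmem : (fun a => p.f (π a)) ∈ Pcond A p.n),
        ψ ⟨p.n, fun a => p.f (π a), hmem⟩ = ψ p)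
    {n : ℕ} {f g : A → Fin n → Bool} (hf : f ∈ Pcond A n) (hg : g ∈ Pcond A n)
    (hfC : ∀ c : ↥C, f c = g c)
    (hmk : ∀ t : Fin n → Bool, #↥({a | f a = t} \ C) = #↥({a | g a = t} \ C)) :
    ψ ⟨n, g, hg⟩ = ψ ⟨n, f, hf⟩ := by
  classical
  have hne : ∀ t : Fin n → Bool,
      Nonempty ({x : ↥Cᶜ // g ↑x = t} ≃ {x : ↥Cᶜ // f ↑x = t}) := by
    intro t
    refine Cardinal.eq.mp ?_
    have h1 : #{x : ↥Cᶜ // g ↑x = t} = #↥({a | g a = t} \ C) :=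
      mk_subtype_compl C (fun a => g a = t)
    have h2 : #{x : ↥Cᶜ // f ↑x = t} = #↥({a | f a = t} \ C) :=
      mk_subtype_compl C (fun a => f a = t)
    rw [h1, h2, hmk t]
  let e : ∀ t : Fin n → Bool, {x : ↥Cᶜ // g ↑x = t} ≃ {x : ↥Cᶜ // f ↑x = t} :=
    fun t => Classical.choice (hne t)
  let σ : ↥Cᶜ ≃ ↥Cᶜ :=
    (Equiv.sigmaFiberEquiv (fun x : ↥Cᶜ => g ↑x)).symm.trans
      ((Equiv.sigmaCongrRight e).trans (Equiv.sigmaFiberEquiv (fun x : ↥Cᶜ => f ↑x)))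
  have hσ : ∀ x : ↥Cᶜ, f ↑(σ x) = g ↑x := fun x => (e (g ↑x) ⟨x, rfl⟩).2
  let π : A ≃ A :=
    (Equiv.Set.sumCompl C).symm.trans
      ((Equiv.sumCongr (Equiv.refl ↥C) σ).trans (Equiv.Set.sumCompl C))
  have hfix : ∀ c ∈ C, π c = c := by
    intro c hc
    simp only [π, Equiv.trans_apply, Equiv.Set.sumCompl_symm_apply_of_mem hc,
      Equiv.sumCongr_apply, Sum.map_inl, Equiv.refl_apply, Equiv.Set.sumCompl_apply_inl]
  have hkey : ∀ a, f (π a) = g a := by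
    intro a
    by_cases ha : a ∈ C
    · rw [hfix a ha]; exact hfC ⟨a, ha⟩
    · have : π a = ↑(σ ⟨a, ha⟩) := by
        simp only [π, Equiv.trans_apply, Equiv.Set.sumCompl_symm_apply_of_notMem ha,
          Equiv.sumCongr_apply, Sum.map_inr, Equiv.Set.sumCompl_apply_inr]
      rw [this]; exact hσ ⟨a, ha⟩
  have h2 : (fun a => f (π a)) = g := funext hkey
  have hmem : (fun a => f (π a)) ∈ Pcond A n := h2 ▸ hg
  have h1 := hinv π hfix ⟨n, f, hf⟩ hmem
  clear_value e σ π
  clear hσ hkey hne hfC hmk e σ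
  subst h2
  exact h1

/-- If `ψ : P → β` is invariant under composing conditions with bijections of
`A` that fix a countable set `C` pointwise, then the range of `ψ` has
cardinality at most `2^ℵ₀`. -/
theorem range_of_invariant_le_continuum (A : Type*) (β : Type*)
    (hA : ¬ (Set.univ : Set A).Countable)
    (C : Set A) (hC : C.Countable)
    (ψ : ForcingCond A → β)
    (hinv : ∀ π : A ≃ A, (∀ c ∈ C, π c = c) →
      ∀ (p : ForcingCond A) (hmem : (fun a => p.f (π a)) ∈ Pcond A p.n),
        ψ ⟨p.n, fun a => p.f (π a), hmem⟩ = ψ p) :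
    Cardinal.mk (Set.range ψ) ≤ Cardinal.continuum := by
  classical
  set Φ : ForcingCond A → Σ n : ℕ, (↥C → (Fin n → Bool)) × ((Fin n → Bool) → ℕ∞) :=
    fun p => ⟨p.n, fun c => p.f ↑c, fun t => ({a | p.f a = t} \ C).encard⟩ with hΦ
  have hfac : ∀ p q : ForcingCond A, Φ p = Φ q → ψ p = ψ q := by
    rintro ⟨n, f, hf⟩ ⟨m, g, hg⟩ h
    simp only [hΦ] at h
    have hn : n = m := congrArg Sigma.fst h
    subst hn
    have h2 := eq_of_heq (Sigma.mk.inj_iff.mp h).2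
    have hfC : ∀ c : ↥C, f ↑c = g ↑c := fun c => congrFun (congrArg Prod.fst h2) c
    have hcard : ∀ t : Fin n → Bool,
        ({a | f a = t} \ C).encard = ({a | g a = t} \ C).encard :=
      fun t => congrFun (congrArg Prod.snd h2) t
    exact (psi_eq ψ hinv hf hg hfC (fun t => fiber_mk_eq hA hC hf hg hcard t)).symm
  let F : ↥(Set.range Φ) → β := fun y => ψ (Classical.choose y.2)
  have hsub : Set.range ψ ⊆ Set.range F := by
    rintro b ⟨p, rfl⟩
    exact ⟨⟨Φ p, ⟨p, rfl⟩⟩, hfac _ _ (Classical.choose_spec (⟨p, rfl⟩ : ∃ q, Φ q = Φ p))⟩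
  have step4 : #(Σ n : ℕ, (↥C → (Fin n → Bool)) × ((Fin n → Bool) → ℕ∞)) ≤
      Cardinal.continuum := by
    rw [Cardinal.mk_sigma]
    have hb : ∀ n : ℕ, #((↥C → (Fin n → Bool)) × ((Fin n → Bool) → ℕ∞)) ≤
        Cardinal.continuum := by
      intro n
      rw [Cardinal.mk_prod]
      have hb1 : #(↥C → (Fin n → Bool)) ≤ Cardinal.continuum := by
        rw [Cardinal.mk_arrow]
        refine pow_le_continuum_aux ?_ ?_
        · exact le_of_lt (Cardinal.lift_lt_aleph0.mpr (Cardinal.lt_aleph0_of_finite _))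
        · simpa using Set.Countable.le_aleph0 hC
      have hb2 : #((Fin n → Bool) → ℕ∞) ≤ ℵ₀ := Cardinal.mk_le_aleph0
      calc Cardinal.lift.{0} #(↥C → (Fin n → Bool)) * Cardinal.lift #((Fin n → Bool) → ℕ∞)
          ≤ Cardinal.continuum * Cardinal.continuum := by
            apply mul_le_mul'
            · simpa [Cardinal.lift_uzero] using hb1
            · exact (Cardinal.lift_le.mpr hb2).trans
                (by simp [Cardinal.lift_aleph0, Cardinal.aleph0_le_continuum])
        _ = Cardinal.continuum := Cardinal.continuum_mul_self
    calc Cardinal.sum (fun n : ℕ => #((↥C → (Fin n → Bool)) × ((Fin n → Bool) → ℕ∞)))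
        ≤ Cardinal.sum (fun _ : ℕ => Cardinal.continuum) := Cardinal.sum_le_sum _ _ hb
      _ = Cardinal.lift #ℕ * Cardinal.lift.{0} Cardinal.continuum := Cardinal.sum_const _ _
      _ ≤ Cardinal.continuum := by
          simp only [Cardinal.mk_nat, Cardinal.lift_aleph0, Cardinal.lift_uzero]
          exact le_of_eq (Cardinal.aleph0_mul_continuum)
  rw [← Cardinal.lift_le_continuum]
  calc Cardinal.lift #(Set.range ψ)
      ≤ Cardinal.lift #(Set.range F) :=
        Cardinal.lift_le.mpr (Cardinal.mk_le_mk_of_subset hsub)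
    _ ≤ Cardinal.lift #(↥(Set.range Φ)) := Cardinal.mk_range_le_lift
    _ ≤ Cardinal.lift (#(Σ n : ℕ, (↥C → (Fin n → Bool)) × ((Fin n → Bool) → ℕ∞))) :=
        Cardinal.lift_le.mpr (Cardinal.mk_set_le _)
    _ ≤ Cardinal.lift Cardinal.continuum := Cardinal.lift_le.mpr step4
    _ = Cardinal.continuum := Cardinal.lift_continuum
end
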